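/- MAXDTS is a valid upper bound on the distance to a segmentation point: suppose the trajectory T = v_0 … v_{k−1} has at least one minimal non-optimal subtrajectory, fix an index 0 ≤ s ≤ k−1, and define MAXDTS(s) as the minimum over all MNOSTs T(i, j) of T of max(|s − i|, |s − j|). Then for every segmentation 0 = b_0 < … < b_B = k−1 of T there exists an index l with 1 ≤ l ≤ B−1 and |s − b_l| ≤ MAXDTS(s). -/
import Mathlib


open scoped ENNReal

variable {V : Type*}

/-- `f 0, f 1, …, f m` is a trajectory: every consecutive pair is joined by an edge
(of finite weight). -/
def IsTraj (w : V → V → ℝ≥0∞) (m : ℕ) (f : ℕ → V) : Prop :=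
  ∀ i < m, w (f i) (f (i + 1)) < ⊤

/-- The cost of the trajectory `f 0, …, f m`. -/
noncomputable def trajCost (w : V → V → ℝ≥0∞) (m : ℕ) (f : ℕ → V) : ℝ≥0∞ :=
  ∑ i ∈ Finset.range m, w (f i) (f (i + 1))

/-- The distance from `u` to `v`: the infimum of costs of all trajectories from `u` to `v`. -/
noncomputable def netDist (w : V → V → ℝ≥0∞) (u v : V) : ℝ≥0∞ :=
  ⨅ (m : ℕ) (f : ℕ → V) (_ : f 0 = u) (_ : f m = v) (_ : IsTraj w m f), trajCost w m f

/-- The subtrajectory `T(i, j)` of the trajectory given by `f` is optimal. -/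
def SegOpt (w : V → V → ℝ≥0∞) (f : ℕ → V) (i j : ℕ) : Prop :=
  trajCost w (j - i) (fun l => f (i + l)) = netDist w (f i) (f j)


lemma netDist_le_trajCost' (w : V → V → ℝ≥0∞) (m : ℕ) (f : ℕ → V) (u v : V)
    (h0 : f 0 = u) (hm : f m = v) (hf : IsTraj w m f) :
    netDist w u v ≤ trajCost w m f := by
  unfold netDist
  exact iInf_le_of_le m (iInf_le_of_le f (iInf_le_of_le h0 (iInf_le_of_le hm (iInf_le _ hf))))

lemma concat_exists (w : V → V → ℝ≥0∞) (m n : ℕ) (f g : ℕ → V) (hfg : f m = g 0)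
    (hf : IsTraj w m f) (hg : IsTraj w n g) :
    ∃ h : ℕ → V, h 0 = f 0 ∧ h (m + n) = g n ∧ IsTraj w (m + n) h ∧
      trajCost w (m + n) h = trajCost w m f + trajCost w n g := by
  set h : ℕ → V := fun i => if i < m then f i else g (i - m) with hh
  have key : ∀ t, w (h t) (h (t + 1)) =
      if t < m then w (f t) (f (t + 1)) else w (g (t - m)) (g (t - m + 1)) := by
    intro t
    by_cases ht : t < m
    · simp only [hh, ht, if_true]
      by_cases ht1 : t + 1 < m
      · simp [ht1]
      · have : t + 1 = m := by omega
        simp [ht1, this, hfg]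
    · have ht1 : ¬ t + 1 < m := by omega
      have : t + 1 - m = t - m + 1 := by omega
      simp [hh, ht, ht1, this]
  refine ⟨h, ?_, ?_, ?_, ?_⟩
  · by_cases h0 : 0 < m
    · simp [hh, h0]
    · have : m = 0 := by omega
      subst this; simpa [hh] using hfg.symm
  · have : ¬ m + n < m := by omega
    simp [hh, this]
  · intro t ht
    rw [key t]
    by_cases htm : t < m
    · simpa [htm] using hf t htm
    · simpa [htm] using hg (t - m) (by omega)
  · unfold trajCost
    rw [Finset.sum_range_add]
    congr 1
    · exact Finset.sum_congr rfl fun t ht => by rw [key t]; simp [Finset.mem_range.mp ht]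
    · refine Finset.sum_congr rfl fun t _ => ?_
      rw [key (m + t)]
      have h1 : ¬ m + t < m := by omega
      have h2 : m + t - m = t := by omega
      simp [h1, h2]

lemma isTraj_piece (w : V → V → ℝ≥0∞) (f : ℕ → V) (a c x y : ℕ)
    (hx : a ≤ x) (hyc : y ≤ c)
    (htr : ∀ t, a ≤ t → t < c → w (f t) (f (t + 1)) < ⊤) :
    IsTraj w (y - x) (fun l => f (x + l)) := by
  intro t ht
  have e : x + (t + 1) = (x + t) + 1 := by omega
  show w (f (x + t)) (f (x + (t + 1))) < ⊤
  rw [e]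
  exact htr (x + t) (by omega) (by omega)

lemma piece_cost_ne_top (w : V → V → ℝ≥0∞) (f : ℕ → V) (a c x y : ℕ)
    (hx : a ≤ x) (hyc : y ≤ c)
    (htr : ∀ t, a ≤ t → t < c → w (f t) (f (t + 1)) < ⊤) :
    trajCost w (y - x) (fun l => f (x + l)) ≠ ⊤ := by
  have := isTraj_piece w f a c x y hx hyc htr
  unfold trajCost
  refine (ENNReal.sum_lt_top.mpr fun t ht => ?_).ne
  exact this t (Finset.mem_range.mp ht)

lemma segOpt_sub (w : V → V → ℝ≥0∞) (f : ℕ → V) (a p q c : ℕ)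
    (hap : a ≤ p) (hpq : p ≤ q) (hqc : q ≤ c)
    (htr : ∀ t, a ≤ t → t < c → w (f t) (f (t + 1)) < ⊤)
    (hopt : SegOpt w f a c) : SegOpt w f p q := by
  have ep : p + (q - p) = q := by omega
  have hle : netDist w (f p) (f q) ≤ trajCost w (q - p) (fun l => f (p + l)) :=
    netDist_le_trajCost' w (q - p) _ (f p) (f q) (by simp) (by rw [ep])
      (isTraj_piece w f a c p q hap hqc htr)
  refine le_antisymm ?_ hle
  by_contra hlt
  push_neg at hlt
  -- extract a strictly better trajectory from p to q
  simp only [netDist, iInf_lt_iff] at hlt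
  obtain ⟨n, g, hg0, hgn, hgt, hglt⟩ := hlt
  -- splice: piece (a,p) ++ g ++ piece (q,c)
  obtain ⟨h1, h10, h1e, h1t, h1c⟩ := concat_exists w (p - a) n (fun l => f (a + l)) g
    (by show f (a + (p - a)) = g 0; rw [show a + (p - a) = p from by omega]; exact hg0.symm)
    (isTraj_piece w f a c a p le_rfl (le_trans hpq hqc) htr) hgt
  obtain ⟨h2, h20, h2e, h2t, h2c⟩ := concat_exists w (p - a + n) (c - q) h1 (fun l => f (q + l))
    (by rw [h1e, hgn]; simp) h1t
    (isTraj_piece w f a c q c (by omega) le_rfl htr)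
  have hnd : netDist w (f a) (f c) ≤
      trajCost w (p - a) (fun l => f (a + l)) + trajCost w n g
        + trajCost w (c - q) (fun l => f (q + l)) := by
    have := netDist_le_trajCost' w (p - a + n + (c - q)) h2 (f a) (f c)
      (by rw [h20, h10]; simp) (by rw [h2e, show q + (c - q) = c by omega]) h2t
    rwa [h2c, h1c] at this
  have hA : trajCost w (p - a) (fun l => f (a + l)) ≠ ⊤ :=
    piece_cost_ne_top w f a c a p le_rfl (le_trans hpq hqc) htr
  have hC : trajCost w (c - q) (fun l => f (q + l)) ≠ ⊤ :=
    piece_cost_ne_top w f a c q c (by omega) le_rfl htr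
  have hstrict : trajCost w (p - a) (fun l => f (a + l)) + trajCost w n g
        + trajCost w (c - q) (fun l => f (q + l)) <
      trajCost w (p - a) (fun l => f (a + l)) + trajCost w (q - p) (fun l => f (p + l))
        + trajCost w (c - q) (fun l => f (q + l)) :=
    ENNReal.add_lt_add_right hC (ENNReal.add_lt_add_left hA hglt)
  have hsplit : trajCost w (c - a) (fun l => f (a + l)) =
      trajCost w (p - a) (fun l => f (a + l)) + trajCost w (q - p) (fun l => f (p + l))
        + trajCost w (c - q) (fun l => f (q + l)) := by
    unfold trajCost
    have h1 : c - a = (p - a) + ((q - p) + (c - q)) := by omega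
    rw [h1, Finset.sum_range_add, Finset.sum_range_add, ← add_assoc]
    congr 1
    congr 1
    · refine Finset.sum_congr rfl fun t _ => ?_
      have e1 : a + (p - a + t) = p + t := by omega
      have e2 : a + (p - a + t + 1) = p + (t + 1) := by omega
      simp only [e1, e2]
    · refine Finset.sum_congr rfl fun t _ => ?_
      have e1 : a + (p - a + (q - p + t)) = q + t := by omega
      have e2 : a + (p - a + (q - p + t) + 1) = q + (t + 1) := by omega
      simp only [e1, e2]
  have : netDist w (f a) (f c) < netDist w (f a) (f c) := by
    calc netDist w (f a) (f c) ≤ _ := hnd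
    _ < _ := hstrict
    _ = trajCost w (c - a) (fun l => f (a + l)) := hsplit.symm
    _ = netDist w (f a) (f c) := hopt
  exact lt_irrefl _ this

/-- `b 0 = 0 < b 1 < … < b B = k - 1` is a segmentation of the trajectory
`f 0, …, f (k-1)` into `B` optimal segments. -/
def IsSeg (w : V → V → ℝ≥0∞) (f : ℕ → V) (k B : ℕ) (b : ℕ → ℕ) : Prop :=
  b 0 = 0 ∧ b B = k - 1 ∧ (∀ l < B, b l < b (l + 1)) ∧
    ∀ l < B, SegOpt w f (b l) (b (l + 1))

/-- `T(i, j)` is a minimal non-optimal subtrajectory (MNOST). -/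
def IsMNOST (w : V → V → ℝ≥0∞) (f : ℕ → V) (i j : ℕ) : Prop :=
  i < j ∧ ¬ SegOpt w f i j ∧ SegOpt w f (i + 1) j ∧ SegOpt w f i (j - 1)

/-- `MAXDTS s`: the minimum over all MNOSTs `T(i, j)` of `T` of `max |s - i| |s - j|`. -/
noncomputable def MAXDTS (w : V → V → ℝ≥0∞) (f : ℕ → V) (k s : ℕ) : ℕ :=
  sInf {e | ∃ i j, j ≤ k - 1 ∧ IsMNOST w f i j ∧ e = max (Nat.dist s i) (Nat.dist s j)}

/-- `MAXDTS` is a valid upper bound on the distance from `s` to a segmentation point: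
every segmentation has a segmentation point within distance `MAXDTS s` of `s`. -/
theorem maxdts_upper_bound [Fintype V]
    (w : V → V → ℝ≥0∞) (k : ℕ) (f : ℕ → V) (s : ℕ) (hs : s ≤ k - 1)
    (htraj : IsTraj w (k - 1) f)
    (hex : ∃ i j, j ≤ k - 1 ∧ IsMNOST w f i j) :
    ∀ B (b : ℕ → ℕ), IsSeg w f k B b →
      ∃ l, 1 ≤ l ∧ l ≤ B - 1 ∧ Nat.dist s (b l) ≤ MAXDTS w f k s := by
  intro B b hseg
  obtain ⟨hb0, hbB, hmono, hopt⟩ := hseg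
  -- the infimum in MAXDTS is attained
  have hEne : {e | ∃ i j, j ≤ k - 1 ∧ IsMNOST w f i j ∧
      e = max (Nat.dist s i) (Nat.dist s j)}.Nonempty := by
    obtain ⟨i, j, hjk, hm⟩ := hex
    exact ⟨max (Nat.dist s i) (Nat.dist s j), i, j, hjk, hm, rfl⟩
  obtain ⟨i, j, hjk, hmnost, hEq⟩ := Nat.sInf_mem hEne
  obtain ⟨hij, hnopt, -, -⟩ := hmnost
  -- monotonicity of b
  have hmono' : ∀ y, y ≤ B → ∀ x, x ≤ y → b x ≤ b y := by
    intro y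
    induction y with
    | zero =>
      intro _ x hx
      have : x = 0 := by omega
      rw [this]
    | succ y ih =>
      intro hyB x hx
      rcases Nat.lt_or_ge x (y + 1) with h | h
      · exact le_trans (ih (by omega) x (by omega)) (le_of_lt (hmono y (by omega)))
      · have : x = y + 1 := by omega
        rw [this]
  -- find the last segmentation index with b l ≤ i
  set P : ℕ → Prop := fun l => b l ≤ i with hP
  have hl0P : P (Nat.findGreatest P B) :=
    Nat.findGreatest_spec (Nat.zero_le B) (by simp [hP, hb0])
  set l0 := Nat.findGreatest P B with hl0def
  have hl0B : l0 ≤ B := Nat.findGreatest_le B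
  have hl0ltB : l0 < B := by
    rcases Nat.lt_or_ge l0 B with h | h
    · exact h
    · exfalso
      have : l0 = B := by omega
      have : b B ≤ i := by rw [← this]; exact hl0P
      omega
  have hgt : i < b (l0 + 1) := by
    by_contra h
    push_neg at h
    exact Nat.findGreatest_is_greatest (P := P) (k := l0 + 1) (n := B) (by omega) (by omega) h
  have hlt : b (l0 + 1) < j := by
    by_contra h
    push_neg at h
    refine hnopt (segOpt_sub w f (b l0) i j (b (l0 + 1)) hl0P (le_of_lt hij) h
      (fun t ht1 ht2 => htraj t ?_) (hopt l0 hl0ltB))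
    have : b (l0 + 1) ≤ b B := hmono' B le_rfl (l0 + 1) (by omega)
    omega
  refine ⟨l0 + 1, by omega, ?_, ?_⟩
  · -- l0 + 1 ≤ B - 1
    have : l0 + 1 ≠ B := by
      intro h
      rw [h, hbB] at hlt
      omega
    omega
  · unfold MAXDTS
    rw [hEq]
    rcases le_total (b (l0 + 1)) s with h | h
    · refine le_trans ?_ (le_max_left _ _)
      simp only [Nat.dist]
      omega
    · refine le_trans ?_ (le_max_right _ _)
      simp only [Nat.dist]
      omega
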